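/- Let $E, F$ be Riesz spaces with $F$ Archimedean. Every orthogonally additive operator $T : E \to F$ is laterally-to-order bounded if and only if either $F = \{0\}$ or the set $\mathfrak{F}_e$ of fragments of $e$ is finite for every $e \in E$. -/

import Mathlib

/-- Disjointness in a Riesz space: `|x| ⊓ |y| = 0`. -/
def RDisjoint {E : Type*} [Lattice E] [AddCommGroup E] (x y : E) : Prop :=
  |x| ⊓ |y| = 0

/-- `x` is a fragment of `e` (lateral order `x ⊑ e`): `x ⊥ (e - x)`. -/
def IsFragment {E : Type*} [Lattice E] [AddCommGroup E] (x e : E) : Prop :=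
  RDisjoint x (e - x)

/-- An orthogonally additive operator. -/
def IsOAO {E F : Type*} [Lattice E] [AddCommGroup E] [Lattice F] [AddCommGroup F]
    (T : E → F) : Prop :=
  ∀ x y : E, RDisjoint x y → T (x + y) = T x + T y

/-!
If `F ≠ 0` and some `e` has infinitely many fragments, then so does `e⁺` or `e⁻`. A positive
element with infinitely many fragments has a proper fragment which again has infinitely many,
so there is a lateral chain `e = r 0 ⊒ r 1 ⊒ ⋯` whose steps `r n - r (n + 1)` are nonzero and
pairwise disjoint, hence linearly independent over `ℚ`. A `ℚ`-linear functional `ℓ` equal to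
`1` on every step makes `x ↦ ℓ x • |f|` an additive, hence orthogonally additive, operator
taking the value `n • |f|` on the fragment `e - r n`; an upper bound for these contradicts that
`F` is Archimedean. Conversely, a finite set of fragments has an order bounded image.
-/

open Function Pointwise

theorem LinearIndependent.exists_linearMap_eq {K V W ι : Type*} [Field K] [AddCommGroup V]
    [Module K V] [AddCommGroup W] [Module K W] {v : ι → V} (hv : LinearIndependent K v)
    (f : ι → W) : ∃ ℓ : V →ₗ[K] W, ∀ i, ℓ (v i) = f i := by
  obtain ⟨ℓ, hℓ⟩ := LinearMap.exists_extend ((Module.Basis.span hv).constr K f)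
  refine ⟨ℓ, fun i ↦ ?_⟩
  have := congr($hℓ (Module.Basis.span hv i))
  rwa [Module.Basis.constr_basis, LinearMap.comp_apply, Module.Basis.span_apply] at this

section LatticeOrderedGroup

variable {α : Type*} [Lattice α] [AddCommGroup α] {a b c e r x y z : α}

theorem RDisjoint.symm (h : RDisjoint x y) : RDisjoint y x := by
  rw [RDisjoint, inf_comm]
  exact h

theorem RDisjoint.neg_right (h : RDisjoint x y) : RDisjoint x (-y) := by
  rw [RDisjoint, abs_neg]
  exact h

theorem IsFragment.sub (h : IsFragment x e) : IsFragment (e - x) e := by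
  rw [IsFragment, sub_sub_cancel]
  exact h.symm

variable [AddLeftMono α]

theorem inf_add_le_inf_add_inf (hx : 0 ≤ x) (ha : 0 ≤ a) (hb : 0 ≤ b) :
    x ⊓ (a + b) ≤ x ⊓ a + x ⊓ b := by
  have key : x ⊓ (a + b) - x ⊓ a ≤ x ⊓ b := by
    rw [sub_inf]
    refine sup_le ((sub_nonpos.2 inf_le_left).trans (le_inf hx hb)) (le_inf ?_ ?_)
    · exact sub_le_iff_le_add.2 (inf_le_left.trans (le_add_of_nonneg_right ha))
    · exact sub_le_iff_le_add'.2 inf_le_right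
  exact sub_le_iff_le_add'.1 key

theorem sup_eq_add_of_inf_eq_zero (h : a ⊓ b = 0) : a ⊔ b = a + b := by
  simpa [h] using inf_add_sup a b

theorem posPart_sub_of_inf_eq_zero (h : a ⊓ b = 0) : (a - b)⁺ = a := by
  rw [posPart_def, ← sub_self b, ← sup_sub, sup_eq_add_of_inf_eq_zero h, add_sub_cancel_right]

theorem eq_zero_of_abs_eq_zero (h : |a| = 0) : a = 0 :=
  le_antisymm ((le_abs_self a).trans h.le) (neg_nonpos.1 ((neg_le_abs a).trans h.le))

theorem abs_posPart_le (a : α) : |a⁺| ≤ |a| := by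
  rw [abs_of_nonneg (posPart_nonneg a)]
  exact sup_le (le_abs_self a) (abs_nonneg a)

theorem abs_negPart_le (a : α) : |a⁻| ≤ |a| := by
  simpa only [posPart_neg, abs_neg] using abs_posPart_le (-a)

theorem rDisjoint_of_abs_inf_abs_le_zero (h : |x| ⊓ |y| ≤ 0) : RDisjoint x y :=
  le_antisymm h (le_inf (abs_nonneg x) (abs_nonneg y))

theorem rDisjoint_zero_right (x : α) : RDisjoint x 0 := by
  rw [RDisjoint, abs_zero, inf_eq_right.2 (abs_nonneg x)]

theorem rDisjoint_posPart_negPart (a : α) : RDisjoint a⁺ a⁻ := by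
  rw [RDisjoint, abs_of_nonneg (posPart_nonneg a), abs_of_nonneg (negPart_nonneg a)]
  exact posPart_inf_negPart_eq_zero a

theorem eq_zero_of_rDisjoint_self (h : RDisjoint x x) : x = 0 :=
  eq_zero_of_abs_eq_zero (by rwa [RDisjoint, inf_idem] at h)

namespace RDisjoint

theorem mono (h : RDisjoint a b) (hx : |x| ≤ |a|) (hy : |y| ≤ |b|) : RDisjoint x y :=
  rDisjoint_of_abs_inf_abs_le_zero ((inf_le_inf hx hy).trans h.le)

theorem inf_eq_zero (h : RDisjoint x y) (hx : 0 ≤ x) (hy : 0 ≤ y) : x ⊓ y = 0 := by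
  rwa [RDisjoint, abs_of_nonneg hx, abs_of_nonneg hy] at h

theorem add_right (hy : RDisjoint x y) (hz : RDisjoint x z) : RDisjoint x (y + z) := by
  refine rDisjoint_of_abs_inf_abs_le_zero ?_
  calc |x| ⊓ |y + z| ≤ |x| ⊓ (|y| + |z|) := inf_le_inf_left _ (abs_add_le y z)
    _ ≤ |x| ⊓ |y| + |x| ⊓ |z| :=
      inf_add_le_inf_add_inf (abs_nonneg x) (abs_nonneg y) (abs_nonneg z)
    _ = 0 := by rw [show |x| ⊓ |y| = 0 from hy, show |x| ⊓ |z| = 0 from hz, add_zero]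

theorem add_left (hx : RDisjoint x z) (hy : RDisjoint y z) : RDisjoint (x + y) z :=
  (hx.symm.add_right hy.symm).symm

theorem nsmul_right (h : RDisjoint x y) : ∀ n : ℕ, RDisjoint x (n • y)
  | 0 => by simpa using rDisjoint_zero_right x
  | n + 1 => by simpa only [succ_nsmul] using (h.nsmul_right n).add_right h

theorem zsmul_right (h : RDisjoint x y) (m : ℤ) : RDisjoint x (m • y) := by
  obtain ⟨n, rfl | rfl⟩ := Int.eq_nat_or_neg m
  · simpa only [natCast_zsmul] using h.nsmul_right n
  · simpa only [neg_zsmul, natCast_zsmul] using (h.nsmul_right n).neg_right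

theorem zsmul_left (h : RDisjoint x y) (m : ℤ) : RDisjoint (m • x) y :=
  (h.symm.zsmul_right m).symm

theorem sum_right {ι : Type*} {s : Finset ι} {f : ι → α} (h : ∀ i ∈ s, RDisjoint x (f i)) :
    RDisjoint x (∑ i ∈ s, f i) :=
  Finset.sum_induction f (RDisjoint x) (fun _ _ ↦ add_right) (rDisjoint_zero_right x) h

theorem posPart_add (h : RDisjoint a b) : (a + b)⁺ = a⁺ + b⁺ := by
  have hpos : RDisjoint (a⁺ + b⁺) (a⁻ + b⁻) :=
    RDisjoint.add_left
      ((rDisjoint_posPart_negPart a).add_right (h.mono (abs_posPart_le a) (abs_negPart_le b)))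
      ((h.symm.mono (abs_posPart_le b) (abs_negPart_le a)).add_right
        (rDisjoint_posPart_negPart b))
  have hsplit : a + b = (a⁺ + b⁺) - (a⁻ + b⁻) := by
    rw [add_sub_add_comm, posPart_sub_negPart, posPart_sub_negPart]
  rw [hsplit, posPart_sub_of_inf_eq_zero (hpos.inf_eq_zero (add_nonneg (posPart_nonneg a)
    (posPart_nonneg b)) (add_nonneg (negPart_nonneg a) (negPart_nonneg b)))]

theorem negPart_add (h : RDisjoint a b) : (a + b)⁻ = a⁻ + b⁻ := by
  have hneg : RDisjoint (-a) (-b) := h.mono (abs_neg a).le (abs_neg b).le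
  rw [← posPart_neg, neg_add, hneg.posPart_add, posPart_neg, posPart_neg]

theorem abs_add (h : RDisjoint a b) : |a + b| = |a| + |b| := by
  rw [← posPart_add_negPart, h.posPart_add, h.negPart_add, ← posPart_add_negPart a,
    ← posPart_add_negPart b, add_add_add_comm]

end RDisjoint

theorem isFragment_self (e : α) : IsFragment e e := by
  rw [IsFragment, sub_self]
  exact rDisjoint_zero_right e

namespace IsFragment

theorem abs_le (h : IsFragment x e) : |x| ≤ |e| := by
  rw [← add_sub_cancel x e, RDisjoint.abs_add h]
  exact le_add_of_nonneg_right (abs_nonneg _)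

theorem trans (hxy : IsFragment x y) (hye : IsFragment y e) : IsFragment x e := by
  rw [IsFragment, ← sub_add_sub_cancel e y x, add_comm]
  exact RDisjoint.add_right hxy (RDisjoint.mono hye hxy.abs_le le_rfl)

theorem posPart (h : IsFragment x e) : IsFragment x⁺ e⁺ := by
  have he : e⁺ = x⁺ + (e - x)⁺ := by simpa using RDisjoint.posPart_add h
  rw [IsFragment, he, add_sub_cancel_left]
  exact RDisjoint.mono h (abs_posPart_le x) (abs_posPart_le _)

theorem negPart (h : IsFragment x e) : IsFragment x⁻ e⁻ := by
  have he : e⁻ = x⁻ + (e - x)⁻ := by simpa using RDisjoint.negPart_add h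
  rw [IsFragment, he, add_sub_cancel_left]
  exact RDisjoint.mono h (abs_negPart_le x) (abs_negPart_le _)

theorem nonneg (h : IsFragment x e) (he : 0 ≤ e) : 0 ≤ x := by
  have h₀ := h.negPart
  rw [negPart_eq_zero.2 he, IsFragment, zero_sub] at h₀
  exact negPart_eq_zero.1 (eq_zero_of_rDisjoint_self (by simpa using h₀.neg_right))

theorem le (h : IsFragment x e) (he : 0 ≤ e) : x ≤ e :=
  sub_nonneg.1 (h.sub.nonneg he)

theorem inf (hc : IsFragment c r) (hx : IsFragment x r) (hr : 0 ≤ r) :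
    IsFragment (x ⊓ c) c := by
  have hcx : c - x ⊓ c ≤ r - x := by
    rw [sub_inf, sub_self]
    exact sup_le (sub_le_sub_right (hc.le hr) x) (sub_nonneg.2 (hx.le hr))
  exact RDisjoint.mono hx
    (abs_le_abs_of_nonneg (le_inf (hx.nonneg hr) (hc.nonneg hr)) inf_le_left)
    (abs_le_abs_of_nonneg (sub_nonneg.2 inf_le_right) hcx)

theorem inf_add_inf_sub (hc : IsFragment c r) (hx : IsFragment x r) (hr : 0 ≤ r) :
    x ⊓ c + x ⊓ (r - c) = x := by
  have hc₀ := hc.nonneg hr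
  have hrc₀ : 0 ≤ r - c := sub_nonneg.2 (hc.le hr)
  have hx₀ := hx.nonneg hr
  have hdisj : (x ⊓ c) ⊓ (x ⊓ (r - c)) = 0 :=
    (RDisjoint.mono hc (abs_le_abs_of_nonneg (le_inf hx₀ hc₀) inf_le_right)
      (abs_le_abs_of_nonneg (le_inf hx₀ hrc₀) inf_le_right)).inf_eq_zero
      (le_inf hx₀ hc₀) (le_inf hx₀ hrc₀)
  refine le_antisymm ?_ ?_
  · rw [← sup_eq_add_of_inf_eq_zero hdisj]
    exact sup_le inf_le_left inf_le_left
  · calc x = x ⊓ (c + (r - c)) := by rw [add_sub_cancel, inf_eq_left.2 (hx.le hr)]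
      _ ≤ x ⊓ c + x ⊓ (r - c) := inf_add_le_inf_add_inf hx₀ hc₀ hrc₀

end IsFragment

theorem setOf_isFragment_subset_sub (e : α) :
    {x | IsFragment x e} ⊆ {x | IsFragment x e⁺} - {x | IsFragment x e⁻} :=
  fun x hx ↦ ⟨x⁺, IsFragment.posPart hx, x⁻, IsFragment.negPart hx, posPart_sub_negPart x⟩

theorem setOf_isFragment_subset_add (hc : IsFragment c r) (hr : 0 ≤ r) :
    {x | IsFragment x r} ⊆ {x | IsFragment x c} + {x | IsFragment x (r - c)} :=
  fun x hx ↦ ⟨x ⊓ c, hc.inf hx hr, x ⊓ (r - c), hc.sub.inf hx hr, hc.inf_add_inf_sub hx hr⟩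

theorem exists_nonneg_isFragment_infinite (h : {x | IsFragment x e}.Infinite) :
    ∃ e₀ : α, 0 ≤ e₀ ∧ {x | IsFragment x e₀}.Infinite := by
  by_contra! hfin
  exact h (((hfin _ (posPart_nonneg e)).sub (hfin _ (negPart_nonneg e))).subset
    (setOf_isFragment_subset_sub e))

theorem exists_isFragment_ne_infinite (hr : 0 ≤ r) (h : {x | IsFragment x r}.Infinite) :
    ∃ c, IsFragment c r ∧ c ≠ r ∧ {x | IsFragment x c}.Infinite := by
  obtain ⟨c, hc, hc0r⟩ := (h.sdiff (Set.toFinite {0, r})).nonempty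
  simp only [Set.mem_insert_iff, Set.mem_singleton_iff, not_or] at hc0r
  by_cases hcinf : {x | IsFragment x c}.Infinite
  · exact ⟨c, hc, hc0r.2, hcinf⟩
  refine ⟨r - c, IsFragment.sub hc, fun h ↦ hc0r.1 (sub_eq_self.1 h), fun hfin ↦ h ?_⟩
  exact ((Set.not_infinite.1 hcinf).add hfin).subset (setOf_isFragment_subset_add hc hr)

theorem exists_seq_isFragment_succ_ne (he : 0 ≤ e) (h : {x | IsFragment x e}.Infinite) :
    ∃ r : ℕ → α, r 0 = e ∧ ∀ n, IsFragment (r (n + 1)) (r n) ∧ r (n + 1) ≠ r n := by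
  have step : ∀ s : {s : α // 0 ≤ s ∧ {x | IsFragment x s}.Infinite},
      ∃ t : {s : α // 0 ≤ s ∧ {x | IsFragment x s}.Infinite},
        IsFragment t.1 s.1 ∧ t.1 ≠ s.1 := by
    rintro ⟨s, hs, hsinf⟩
    obtain ⟨c, hc, hcs, hcinf⟩ := exists_isFragment_ne_infinite hs hsinf
    exact ⟨⟨c, hc.nonneg hs, hcinf⟩, hc, hcs⟩
  choose next hnext using step
  refine ⟨fun n ↦ (next^[n] ⟨e, he, h⟩).1, rfl, fun n ↦ ?_⟩
  simpa only [Function.iterate_succ_apply'] using hnext _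

theorem linearIndependent_int_of_pairwise_rDisjoint [IsAddTorsionFree α] {ι : Type*}
    {d : ι → α} (hd : Pairwise (RDisjoint on d)) (hne : ∀ i, d i ≠ 0) :
    LinearIndependent ℤ d := by
  classical
  rw [linearIndependent_iff']
  intro s m hsum j hj
  have hrest : RDisjoint (d j) (∑ i ∈ s.erase j, m i • d i) :=
    RDisjoint.sum_right fun i hi ↦ (hd (Finset.ne_of_mem_erase hi).symm).zsmul_right (m i)
  have hj_eq : m j • d j = -∑ i ∈ s.erase j, m i • d i :=
    eq_neg_of_add_eq_zero_left ((Finset.add_sum_erase s (fun i ↦ m i • d i) hj).trans hsum)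
  have hself : RDisjoint (m j • d j) (m j • d j) := by
    have := hrest.neg_right
    rw [← hj_eq] at this
    exact this.zsmul_left (m j)
  exact (smul_eq_zero.1 (eq_zero_of_rDisjoint_self hself)).resolve_right (hne j)

section LateralChain

variable {r : ℕ → α}

theorem isFragment_of_le_of_isFragment_succ (hr : ∀ n, IsFragment (r (n + 1)) (r n)) {m n : ℕ}
    (hmn : m ≤ n) : IsFragment (r n) (r m) := by
  induction n, hmn using Nat.le_induction with
  | base => exact isFragment_self _
  | succ n _ ih => exact (hr n).trans ih

theorem pairwise_rDisjoint_sub_succ (hr : ∀ n, IsFragment (r (n + 1)) (r n)) :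
    Pairwise (RDisjoint on fun n ↦ r n - r (n + 1)) := by
  have key : ∀ i j, i < j → RDisjoint (r i - r (i + 1)) (r j - r (j + 1)) := fun i j hij ↦
    RDisjoint.mono (hr i).symm le_rfl
      ((hr j).sub.abs_le.trans (isFragment_of_le_of_isFragment_succ hr hij).abs_le)
  intro i j hij
  rcases hij.lt_or_gt with h | h
  · exact key i j h
  · exact (key j i h).symm

theorem exists_linearMap_sub_eq_natCast [Module ℚ α] (hr : ∀ n, IsFragment (r (n + 1)) (r n))
    (hne : ∀ n, r (n + 1) ≠ r n) : ∃ ℓ : α →ₗ[ℚ] ℚ, ∀ n, ℓ (r 0 - r n) = n := by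
  have : IsAddTorsionFree α := .of_module_rat α
  have hind : LinearIndependent ℚ fun n ↦ r n - r (n + 1) :=
    (LinearIndependent.iff_fractionRing ℤ ℚ).1 (linearIndependent_int_of_pairwise_rDisjoint
      (pairwise_rDisjoint_sub_succ hr) fun n ↦ sub_ne_zero.2 (hne n).symm)
  obtain ⟨ℓ, hℓ⟩ := hind.exists_linearMap_eq fun _ ↦ (1 : ℚ)
  refine ⟨ℓ, fun n ↦ ?_⟩
  rw [← Finset.sum_range_sub', map_sum, Finset.sum_congr rfl fun k _ ↦ hℓ k]
  simp

end LateralChain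

theorem exists_isFragment_linearMap_eq_natCast [Module ℚ α] (he : 0 ≤ e)
    (h : {x | IsFragment x e}.Infinite) :
    ∃ p : ℕ → α, (∀ n, IsFragment (p n) e) ∧ ∃ ℓ : α →ₗ[ℚ] ℚ, ∀ n, ℓ (p n) = n := by
  obtain ⟨r, rfl, hr⟩ := exists_seq_isFragment_succ_ne he h
  obtain ⟨ℓ, hℓ⟩ := exists_linearMap_sub_eq_natCast (fun n ↦ (hr n).1) fun n ↦ (hr n).2
  exact ⟨fun n ↦ r 0 - r n, fun n ↦ (isFragment_of_le_of_isFragment_succ (fun n ↦ (hr n).1)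
    (Nat.zero_le n)).sub, ℓ, hℓ⟩

end LatticeOrderedGroup

variable {E F : Type*}
  [Lattice E] [AddCommGroup E] [CovariantClass E E (· + ·) (· ≤ ·)]
  [Lattice F] [AddCommGroup F] [CovariantClass F F (· + ·) (· ≤ ·)]

/-- Characterization: every OAO from `E` to an Archimedean `F` is laterally-to-order
bounded iff `F = {0}` or every element of `E` has only finitely many fragments. -/
theorem every_oao_laterally_to_order_bounded_iff
    [Module ℝ E] [Module ℝ F]
    (hArch : ∀ x y : F, 0 ≤ x → (∀ n : ℕ, n • x ≤ y) → x = 0) :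
    (∀ T : E → F, IsOAO T →
      ∀ e : E, ∃ a b : F, ∀ x : E, IsFragment x e → a ≤ T x ∧ T x ≤ b) ↔
    ((∀ f : F, f = 0) ∨ ∀ e : E, {x : E | IsFragment x e}.Finite) := by
  constructor
  · intro hbdd
    by_contra! ⟨⟨f, hf⟩, e, he⟩
    obtain ⟨e₀, he₀, hinf⟩ := exists_nonneg_isFragment_infinite he
    -- The real scalars need not respect the order; only the canonical `ℚ`-structure is used.
    let : Module ℚ E := Module.compHom E (Rat.castHom ℝ)
    obtain ⟨p, hp, ℓ, hℓ⟩ := exists_isFragment_linearMap_eq_natCast he₀ hinf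
    obtain ⟨_, b, hb⟩ := hbdd (fun x ↦ (ℓ x : ℝ) • |f|) (fun x y _ ↦ by simp [add_smul]) e₀
    refine hf (eq_zero_of_abs_eq_zero (hArch |f| b (abs_nonneg f) fun n ↦ ?_))
    simpa [hℓ, Nat.cast_smul_eq_nsmul] using (hb (p n) (hp n)).2
  · rintro (hF | hfin) T - e
    · exact ⟨0, 0, fun x _ ↦ by simp [hF (T x)]⟩
    · obtain ⟨a, ha⟩ := ((hfin e).image T).bddBelow
      obtain ⟨b, hb⟩ := ((hfin e).image T).bddAbove
      exact ⟨a, b, fun x hx ↦ ⟨ha ⟨x, hx, rfl⟩, hb ⟨x, hx, rfl⟩⟩⟩
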